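/- Let φ : S → L^p(Ω) be a disintegration and C ⊆ S an almost norm-maximizing chain. Then the subvector-infimum g of φ[C] exists, g is the L^p-norm limit of φ(ν) as ν traverses C in increasing order, and g is either 0 or an atom of the subvector order. -/

import Mathlib

/-!
Along the chain the vectors `φ ν` decrease in the subvector order (a child is cut out of its
parent by the separation property), so for `ν <+: ν'` in `C` we get
`‖φ ν - φ ν'‖ ^ p = ‖φ ν‖ ^ p - ‖φ ν'‖ ^ p`, and the decreasing, bounded-below quantity
`‖φ ν‖ ^ p` makes `φ` Cauchy along `C`; let `g` be its limit. Both `{f | f ⪯ F}` and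
`{f | h ⪯ f}` are closed, the latter because `h ⪯ f` iff `f · χ_{supp h} = h`, so `g` is the
infimum of `φ[C]`.

For the atom property, multiplication by `χ_{supp g}` sends every `φ μ` to `g` or to `0`:
either `μ` is a prefix of a node of `C`, or it branches off `C`, because a chain that always
contains a child of its nodes cannot consist of strict prefixes of `μ`. By density of the span of `φ[S]`
this multiplication maps `L^p` into `ℂ ∙ g`, and a subvector `c • g` of `g ≠ 0` has `c ∈ {0, 1}`.
-/

open MeasureTheory

/-- `f` is a subvector of `g`: `f = g · χ_A` a.e. for some measurable set `A`. -/
def Subvec {α : Type*} [MeasurableSpace α] {μ : Measure α} {p : ENNReal}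
    (f g : Lp ℂ p μ) : Prop :=
  ∃ A : Set α, MeasurableSet A ∧ (f : α → ℂ) =ᵐ[μ] A.indicator (g : α → ℂ)

/-- `g` is an atom of the subvector order. -/
def SubvecAtom {α : Type*} [MeasurableSpace α] {μ : Measure α} {p : ENNReal}
    (g : Lp ℂ p μ) : Prop :=
  g ≠ 0 ∧ ∀ h : Lp ℂ p μ, Subvec h g → h = 0 ∨ h = g

/-- `S ⊆ ℕ*` is a tree: closed under initial segments. -/
def IsTree (S : Set (List ℕ)) : Prop :=
  ∀ ν ∈ S, ∀ ν' : List ℕ, ν' <+: ν → ν' ∈ S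

/-- `φ` is summative on `S`. -/
def Summative {α : Type*} [MeasurableSpace α] {μ : Measure α} {p : ENNReal}
    [Fact (1 ≤ p)] (S : Set (List ℕ)) (φ : List ℕ → Lp ℂ p μ) : Prop :=
  ∀ ν ∈ S, (∃ k : ℕ, ν ++ [k] ∈ S) →
    HasSum (fun k : {k : ℕ // ν ++ [k] ∈ S} => φ (ν ++ [k.1])) (φ ν)

/-- `φ` is separating on `S`. -/
def Separating {α : Type*} [MeasurableSpace α] {μ : Measure α} {p : ENNReal}
    (S : Set (List ℕ)) (φ : List ℕ → Lp ℂ p μ) : Prop :=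
  ∀ ν ∈ S, ∀ ν' ∈ S, ¬ ν <+: ν' → ¬ ν' <+: ν →
    (φ ν : _ → ℂ) * (φ ν' : _ → ℂ) =ᵐ[μ] 0

/-- `φ : S → L^p(Ω)` is a disintegration: injective, non-vanishing, summative, separating,
with linearly dense range. -/
def Disintegration {α : Type*} [MeasurableSpace α] {μ : Measure α} {p : ENNReal}
    [Fact (1 ≤ p)] (S : Set (List ℕ)) (φ : List ℕ → Lp ℂ p μ) : Prop :=
  IsTree S ∧ Set.InjOn φ S ∧ (∀ ν ∈ S, φ ν ≠ 0) ∧ Summative S φ ∧ Separating S φ ∧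
    Dense ((Submodule.span ℂ (φ '' S) : Submodule ℂ (Lp ℂ p μ)) : Set (Lp ℂ p μ))

/-- `C ⊆ S` is an almost norm-maximizing chain for `φ` (with exponent `pr`). -/
def ANMChain {α : Type*} [MeasurableSpace α] {μ : Measure α} {p : ENNReal} [Fact (1 ≤ p)]
    (pr : ℝ) (S : Set (List ℕ)) (φ : List ℕ → Lp ℂ p μ) (C : Set (List ℕ)) : Prop :=
  C ⊆ S ∧ IsChain (· <+: ·) C ∧
    ∀ ν ∈ C, (∃ k : ℕ, ν ++ [k] ∈ S) →
      ∃ k : ℕ, ν ++ [k] ∈ C ∧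
        ∀ k' : ℕ, ν ++ [k'] ∈ S →
          ‖φ (ν ++ [k'])‖ ^ pr ≤ ‖φ (ν ++ [k])‖ ^ pr + 2 ^ (-((ν.length + 1 : ℕ) : ℝ))

open MeasureTheory Filter Set Topology Function
open scoped ENNReal

namespace MeasureTheory.Lp

variable {α E 𝕜 : Type*} [MeasurableSpace α] {μ : Measure α} {p : ℝ≥0∞}
  [NormedAddCommGroup E] {s : Set α}

theorem measurableSet_support (f : Lp E p μ) : MeasurableSet (support f) :=
  (Lp.stronglyMeasurable f).measurableSet_support

noncomputable def indicatorLp (hs : MeasurableSet s) (f : Lp E p μ) : Lp E p μ :=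
  ((Lp.memLp f).indicator hs).toLp (s.indicator f)

theorem coeFn_indicatorLp (hs : MeasurableSet s) (f : Lp E p μ) :
    indicatorLp hs f =ᵐ[μ] s.indicator f :=
  MemLp.coeFn_toLp _

theorem norm_indicatorLp_le (hs : MeasurableSet s) (f : Lp E p μ) : ‖indicatorLp hs f‖ ≤ ‖f‖ := by
  rw [indicatorLp, Lp.norm_toLp, Lp.norm_def]
  exact ENNReal.toReal_mono (Lp.eLpNorm_ne_top f) (eLpNorm_indicator_le _)

section Norm

variable {p : ℝ} (hp : 0 < p) (f : Lp E (ENNReal.ofReal p) μ)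
include hp

theorem lintegral_enorm_rpow_eq :
    ∫⁻ x, ‖f x‖ₑ ^ p ∂μ = eLpNorm f (ENNReal.ofReal p) μ ^ p := by
  have := eLpNorm_nnreal_pow_eq_lintegral (μ := μ) (f := f) (p := p.toNNReal) (by simpa using hp)
  rw [Real.coe_toNNReal _ hp.le] at this
  exact this.symm

theorem lintegral_enorm_rpow_ne_top : ∫⁻ x, ‖f x‖ₑ ^ p ∂μ ≠ ∞ := by
  rw [lintegral_enorm_rpow_eq hp]
  exact ENNReal.rpow_ne_top_of_nonneg hp.le (Lp.eLpNorm_ne_top f)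

theorem norm_rpow_eq_toReal_lintegral : ‖f‖ ^ p = (∫⁻ x, ‖f x‖ₑ ^ p ∂μ).toReal := by
  rw [lintegral_enorm_rpow_eq hp, Lp.norm_def, ENNReal.toReal_rpow]

end Norm

variable (𝕜) [Fact (1 ≤ p)] [NormedField 𝕜] [NormedSpace 𝕜 E]

noncomputable def indicatorL (hs : MeasurableSet s) : Lp E p μ →L[𝕜] Lp E p μ :=
  LinearMap.mkContinuous
    { toFun := indicatorLp hs
      map_add' := fun f g => Lp.ext <| by
        filter_upwards [coeFn_indicatorLp hs (f + g), coeFn_indicatorLp hs f,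
          coeFn_indicatorLp hs g, Lp.coeFn_add f g,
          Lp.coeFn_add (indicatorLp hs f) (indicatorLp hs g)] with x h h₁ h₂ h₃ h₄
        by_cases hx : x ∈ s <;> simp_all
      map_smul' := fun c f => Lp.ext <| by
        filter_upwards [coeFn_indicatorLp hs (c • f), coeFn_indicatorLp hs f,
          Lp.coeFn_smul c f, Lp.coeFn_smul c (indicatorLp hs f)] with x h h₁ h₂ h₃
        by_cases hx : x ∈ s <;> simp_all } 1
    fun f => by simpa using norm_indicatorLp_le hs f

theorem coeFn_indicatorL (hs : MeasurableSet s) (f : Lp E p μ) :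
    indicatorL 𝕜 hs f =ᵐ[μ] s.indicator f :=
  coeFn_indicatorLp hs f

theorem isClosed_setOf_ae_mem {K : α → Set E}
    (hK : ∀ x, IsClosed (K x)) : IsClosed {f : Lp E p μ | ∀ᵐ x ∂μ, f x ∈ K x} := by
  refine IsSeqClosed.isClosed fun f g hf hfg => ?_
  obtain ⟨ns, -, hae⟩ := (tendstoInMeasure_of_tendsto_Lp hfg).exists_seq_tendsto_ae
  filter_upwards [hae, ae_all_iff.2 hf] with x hx hfx
  exact (hK x).mem_of_tendsto hx (Eventually.of_forall fun n => hfx (ns n))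

end MeasureTheory.Lp

section Subvec

variable {α : Type*} [MeasurableSpace α] {μ : Measure α} {q : ℝ≥0∞}

theorem subvec_iff_ae {f g : Lp ℂ q μ} : Subvec f g ↔ ∀ᵐ x ∂μ, f x = 0 ∨ f x = g x := by
  constructor
  · rintro ⟨A, -, hA⟩
    filter_upwards [hA] with x hx
    by_cases hxA : x ∈ A <;> simp [hx, hxA]
  · intro h
    refine ⟨support f, Lp.measurableSet_support f, ?_⟩
    filter_upwards [h] with x hx
    by_cases hfx : f x = 0
    · simp [hfx]
    · rw [indicator_of_mem hfx, hx.resolve_left hfx]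

namespace Subvec

theorem refl (f : Lp ℂ q μ) : Subvec f f :=
  subvec_iff_ae.2 (ae_of_all _ fun _ => Or.inr rfl)

theorem trans {f g h : Lp ℂ q μ} (hfg : Subvec f g) (hgh : Subvec g h) : Subvec f h := by
  rw [subvec_iff_ae] at *
  filter_upwards [hfg, hgh] with x h₁ h₂
  rcases h₁ with h₁ | h₁ <;> simp_all

theorem eq_zero_or_eq_one_of_smul {g : Lp ℂ q μ} {c : ℂ} (hg : g ≠ 0) (hc : Subvec (c • g) g) :
    c = 0 ∨ c = 1 := by
  by_contra! hc01
  refine hg (Lp.eq_zero_iff_ae_eq_zero.2 ?_)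
  filter_upwards [subvec_iff_ae.1 hc, Lp.coeFn_smul c g] with x hx hcx
  rw [hcx, Pi.smul_apply, smul_eq_mul] at hx
  rcases hx with hx | hx
  · exact (mul_eq_zero.1 hx).resolve_left hc01.1
  · simpa [hc01.2] using (mul_left_eq_self₀.1 hx)

theorem norm_rpow_add {p : ℝ} (hp : 0 < p) {f g : Lp ℂ (ENNReal.ofReal p) μ} (hfg : Subvec f g) :
    ‖f‖ ^ p + ‖g - f‖ ^ p = ‖g‖ ^ p := by
  obtain ⟨A, hA, hfA⟩ := hfg
  have hf : (fun x => ‖f x‖ₑ ^ p) =ᵐ[μ] A.indicator fun x => ‖g x‖ₑ ^ p := by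
    filter_upwards [hfA] with x hx
    by_cases hxA : x ∈ A <;> simp [hx, hxA, ENNReal.zero_rpow_of_pos hp]
  have hgf : (fun x => ‖(g - f) x‖ₑ ^ p) =ᵐ[μ] Aᶜ.indicator fun x => ‖g x‖ₑ ^ p := by
    filter_upwards [hfA, Lp.coeFn_sub g f] with x hx hsub
    rw [hsub, Pi.sub_apply, hx]
    by_cases hxA : x ∈ A <;> simp [hxA, ENNReal.zero_rpow_of_pos hp]
  have hsplit : ∫⁻ x, ‖f x‖ₑ ^ p ∂μ + ∫⁻ x, ‖(g - f) x‖ₑ ^ p ∂μ = ∫⁻ x, ‖g x‖ₑ ^ p ∂μ := by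
    rw [lintegral_congr_ae hf, lintegral_congr_ae hgf, lintegral_indicator hA,
      lintegral_indicator hA.compl, lintegral_add_compl _ hA]
  rw [Lp.norm_rpow_eq_toReal_lintegral hp, Lp.norm_rpow_eq_toReal_lintegral hp,
    Lp.norm_rpow_eq_toReal_lintegral hp, ← ENNReal.toReal_add
      (Lp.lintegral_enorm_rpow_ne_top hp f) (Lp.lintegral_enorm_rpow_ne_top hp _), hsplit]

end Subvec

variable [Fact (1 ≤ q)]

theorem subvec_iff_indicatorL {h g : Lp ℂ q μ} :
    Subvec h g ↔ Lp.indicatorL ℂ (Lp.measurableSet_support h) g = h := by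
  constructor
  · intro hhg
    refine Lp.ext ?_
    filter_upwards [Lp.coeFn_indicatorL ℂ (Lp.measurableSet_support h) g,
      subvec_iff_ae.1 hhg] with x hx hhx
    rw [hx]
    by_cases hx0 : h x = 0
    · rw [indicator_of_notMem (not_not.2 hx0), hx0]
    · rw [indicator_of_mem hx0, hhx.resolve_left hx0]
  · intro hT
    refine ⟨support h, Lp.measurableSet_support h, ?_⟩
    have := Lp.coeFn_indicatorL ℂ (Lp.measurableSet_support h) g
    rwa [hT] at this

theorem Subvec.indicatorL_support {h g : Lp ℂ q μ} (hhg : Subvec h g) :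
    Lp.indicatorL ℂ (Lp.measurableSet_support g) h = h := by
  refine Lp.ext ?_
  filter_upwards [Lp.coeFn_indicatorL ℂ (Lp.measurableSet_support g) h,
    subvec_iff_ae.1 hhg] with x hx hhx
  rw [hx]
  by_cases hx0 : g x = 0
  · rw [indicator_of_notMem (not_not.2 hx0)]
    rcases hhx with h0 | h0 <;> simp [h0, hx0]
  · rw [indicator_of_mem hx0]

theorem isClosed_setOf_subvec_left (g : Lp ℂ q μ) : IsClosed {f : Lp ℂ q μ | Subvec f g} := by
  simp_rw [subvec_iff_ae]
  exact Lp.isClosed_setOf_ae_mem (K := fun x => {0, g x}) fun x => (Set.toFinite _).isClosed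

theorem isClosed_setOf_subvec_right (h : Lp ℂ q μ) : IsClosed {g : Lp ℂ q μ | Subvec h g} := by
  simp_rw [subvec_iff_indicatorL]
  exact isClosed_eq (ContinuousLinearMap.continuous _) continuous_const

end Subvec

section Atom

variable {α : Type*} [MeasurableSpace α] {μ : Measure α} {q : ℝ≥0∞} [Fact (1 ≤ q)]

theorem eq_zero_or_subvecAtom_of_dense {G : Set (Lp ℂ q μ)}
    (hG : Dense (Submodule.span ℂ G : Set (Lp ℂ q μ))) {g : Lp ℂ q μ}
    (hT : ∀ u ∈ G, Lp.indicatorL ℂ (Lp.measurableSet_support g) u ∈ ℂ ∙ g) :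
    g = 0 ∨ SubvecAtom g := by
  set T := Lp.indicatorL ℂ (Lp.measurableSet_support g) (E := ℂ) (μ := μ) (p := q)
  have hrange : ∀ f, T f ∈ ℂ ∙ g := fun f =>
    ((ℂ ∙ g).closed_of_finiteDimensional.preimage T.continuous).closure_subset_iff.2
      (Submodule.span_le (p := (ℂ ∙ g).comap T.toLinearMap).2 hT) (hG f)
  by_cases hg : g = 0
  · exact .inl hg
  refine .inr ⟨hg, fun h hhg => ?_⟩
  obtain ⟨c, hc⟩ := Submodule.mem_span_singleton.1 (hrange h)
  rw [hhg.indicatorL_support] at hc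
  rcases (hc ▸ hhg).eq_zero_or_eq_one_of_smul hg with rfl | rfl
  · exact .inl (by rw [← hc, zero_smul])
  · exact .inr (by rw [← hc, one_smul])

end Atom

section ChainLimit

def chainAtTop (C : Set (List ℕ)) : Filter (List ℕ) :=
  ⨅ ν ∈ C, 𝓟 {τ ∈ C | ν <+: τ}

variable {C : Set (List ℕ)}

theorem mem_chainAtTop {ν : List ℕ} (hν : ν ∈ C) : {τ ∈ C | ν <+: τ} ∈ chainAtTop C :=
  mem_iInf_of_mem ν (mem_iInf_of_mem hν (mem_principal_self _))

namespace IsChain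

variable (hC : IsChain (· <+: ·) C) (hne : C.Nonempty)
include hC hne

theorem hasBasis_chainAtTop : (chainAtTop C).HasBasis (· ∈ C) fun ν => {τ ∈ C | ν <+: τ} := by
  refine hasBasis_biInf_principal (fun a ha b hb => ?_) hne
  rcases hC.total ha hb with hab | hba
  · exact ⟨b, hb, fun τ hτ => ⟨hτ.1, hab.trans hτ.2⟩, le_rfl⟩
  · exact ⟨a, ha, le_rfl, fun τ hτ => ⟨hτ.1, hba.trans hτ.2⟩⟩

theorem neBot_chainAtTop : (chainAtTop C).NeBot :=
  (hC.hasBasis_chainAtTop hne).neBot_iff.2 fun hν => ⟨_, hν, List.prefix_refl _⟩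

variable {E : Type*} [NormedAddCommGroup E]

theorem tendsto_chainAtTop_iff {ψ : List ℕ → E} {g : E} :
    Tendsto ψ (chainAtTop C) (𝓝 g) ↔
      ∀ ε > (0 : ℝ), ∃ ν ∈ C, ∀ ν' ∈ C, ν <+: ν' → ‖ψ ν' - g‖ < ε := by
  simp [(hC.hasBasis_chainAtTop hne).tendsto_iff Metric.nhds_basis_ball, dist_eq_norm]

theorem exists_tendsto_chainAtTop [CompleteSpace E] {ψ : List ℕ → E} {N : List ℕ → ℝ} {p : ℝ}
    (hp : 0 < p) (hN : ∀ ν ∈ C, 0 ≤ N ν)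
    (hψ : ∀ a ∈ C, ∀ b ∈ C, a <+: b → ‖ψ a - ψ b‖ ^ p ≤ N a - N b) :
    ∃ g, Tendsto ψ (chainAtTop C) (𝓝 g) := by
  have := hC.neBot_chainAtTop hne
  suffices Cauchy (map ψ (chainAtTop C)) from CompleteSpace.complete this
  refine Metric.cauchy_iff.2 ⟨inferInstance, fun ε hε => ?_⟩
  obtain ⟨_, ⟨ν, hν, rfl⟩, hνinf⟩ := Real.lt_sInf_add_pos (hne.image N) (Real.rpow_pos_of_pos hε p)
  have hbdd : BddBelow (N '' C) := ⟨0, by rintro _ ⟨τ, hτ, rfl⟩; exact hN τ hτ⟩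
  have hclose : ∀ a ∈ C, ∀ b ∈ C, ν <+: a → a <+: b → ‖ψ a - ψ b‖ < ε := by
    intro a ha b hb hνa hab
    have hνa' := hψ ν hν a ha hνa
    have hab' := hψ a ha b hb hab
    have hinf := csInf_le hbdd (mem_image_of_mem N hb)
    have := Real.rpow_nonneg (norm_nonneg (ψ ν - ψ a)) p
    exact (Real.rpow_lt_rpow_iff (norm_nonneg _) hε.le hp).1 (by linarith)
  refine ⟨ψ '' {τ ∈ C | ν <+: τ}, image_mem_map (mem_chainAtTop hν), ?_⟩
  rintro _ ⟨a, ⟨ha, hνa⟩, rfl⟩ _ ⟨b, ⟨hb, hνb⟩, rfl⟩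
  rw [dist_eq_norm]
  rcases hC.total ha hb with hab | hba
  · exact hclose a ha b hb hνa hab
  · exact norm_sub_rev (ψ a) (ψ b) ▸ hclose b hb a ha hνb hba

end IsChain

end ChainLimit

section Tree

variable {α : Type*} [MeasurableSpace α] {μ : Measure α} {q : ℝ≥0∞} [Fact (1 ≤ q)]
  {S : Set (List ℕ)} {φ : List ℕ → Lp ℂ q μ}

theorem indicatorL_support_eq_zero_of_mul {u v g : Lp ℂ q μ} (huv : ⇑u * ⇑v =ᵐ[μ] 0)
    (hgv : Subvec g v) : Lp.indicatorL ℂ (Lp.measurableSet_support g) u = 0 := by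
  refine Lp.ext ?_
  filter_upwards [Lp.coeFn_indicatorL ℂ (Lp.measurableSet_support g) u, huv,
    subvec_iff_ae.1 hgv, Lp.coeFn_zero ℂ q μ] with x hx hxuv hxg hx0
  rw [hx, hx0]
  by_cases hgx : g x = 0
  · exact indicator_of_notMem (not_not.2 hgx) _
  · have hvx : v x ≠ 0 := hxg.resolve_left hgx ▸ hgx
    rw [indicator_of_mem hgx]
    exact (mul_eq_zero.1 hxuv).resolve_right hvx

theorem Summative.subvec_child (hsum : Summative S φ) (hsep : Separating S φ) {ν : List ℕ} {k : ℕ}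
    (hν : ν ∈ S) (hk : ν ++ [k] ∈ S) : Subvec (φ (ν ++ [k])) (φ ν) := by
  set T := Lp.indicatorL ℂ (Lp.measurableSet_support (φ (ν ++ [k]))) (E := ℂ) (μ := μ) (p := q)
  have hsibling : ∀ j : {j // ν ++ [j] ∈ S}, j ≠ ⟨k, hk⟩ → T (φ (ν ++ [j.1])) = 0 := by
    rintro ⟨j, hj⟩ hjk
    have hjk : j ≠ k := fun h => hjk (Subtype.ext h)
    exact indicatorL_support_eq_zero_of_mul
      (hsep _ hj _ hk (by simpa using hjk) (by simpa using hjk.symm)) (Subvec.refl _)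
  have hT := hasSum_single (f := fun j : {j // ν ++ [j] ∈ S} => T (φ (ν ++ [j.1]))) _ hsibling
  rw [(Subvec.refl _).indicatorL_support] at hT
  exact subvec_iff_indicatorL.2 (((hsum ν hν ⟨k, hk⟩).mapL T).unique hT)

theorem subvec_of_prefix (hT : IsTree S) (hsum : Summative S φ) (hsep : Separating S φ)
    {ν ν' : List ℕ} (hν' : ν' ∈ S) (h : ν <+: ν') : Subvec (φ ν') (φ ν) := by
  obtain ⟨t, rfl⟩ := h
  induction t using List.reverseRecOn with
  | nil => simpa using Subvec.refl _
  | append_singleton t a ih =>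
    rw [← List.append_assoc] at hν' ⊢
    have hpar : ν ++ t ∈ S := hT _ hν' _ (List.prefix_append _ _)
    exact (hsum.subvec_child hsep hpar hν').trans (ih hpar)

theorem IsTree.exists_mem_not_strictPrefix (hT : IsTree S) {C : Set (List ℕ)} (hne : C.Nonempty)
    (hchild : ∀ ν ∈ C, (∃ k, ν ++ [k] ∈ S) → ∃ k, ν ++ [k] ∈ C) {μ' : List ℕ} (hμ' : μ' ∈ S) :
    ∃ τ ∈ C, μ' <+: τ ∨ ¬ τ <+: μ' := by
  by_contra! hbelow
  have hlong : ∀ n, ∃ τ ∈ C, n ≤ τ.length := by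
    intro n
    induction n with
    | zero => exact hne.imp fun τ hτ => ⟨hτ, Nat.zero_le _⟩
    | succ n ih =>
      obtain ⟨τ, hτ, hn⟩ := ih
      obtain ⟨hnot, t, rfl⟩ := hbelow τ hτ
      obtain ⟨a, t, rfl⟩ := List.exists_cons_of_ne_nil (l := t) (by rintro rfl; simp at hnot)
      obtain ⟨k, hk⟩ := hchild τ hτ ⟨a, hT _ hμ' _ ⟨t, by simp⟩⟩
      exact ⟨_, hk, by simp; omega⟩
  obtain ⟨τ, hτ, hlen⟩ := hlong (μ'.length + 1)
  have := (hbelow τ hτ).2.length_le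
  omega

theorem indicatorL_support_mem_span (hT : IsTree S) (hsum : Summative S φ) (hsep : Separating S φ)
    {C : Set (List ℕ)} (hCS : C ⊆ S) (hne : C.Nonempty)
    (hchild : ∀ ν ∈ C, (∃ k, ν ++ [k] ∈ S) → ∃ k, ν ++ [k] ∈ C)
    {g : Lp ℂ q μ} (hg : ∀ τ ∈ C, Subvec g (φ τ)) :
    ∀ u ∈ φ '' S, Lp.indicatorL ℂ (Lp.measurableSet_support g) u ∈ ℂ ∙ g := by
  rintro _ ⟨μ', hμ', rfl⟩
  obtain ⟨τ, hτ, hμ'τ⟩ := hT.exists_mem_not_strictPrefix hne hchild hμ'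
  by_cases hpre : μ' <+: τ
  · rw [subvec_iff_indicatorL.1 ((hg τ hτ).trans (subvec_of_prefix hT hsum hsep (hCS hτ) hpre))]
    exact Submodule.mem_span_singleton_self g
  · rw [indicatorL_support_eq_zero_of_mul
      (hsep μ' hμ' τ (hCS hτ) hpre (hμ'τ.resolve_left hpre)) (hg τ hτ)]
    exact Submodule.zero_mem _

end Tree

theorem stmt17 {α : Type*} [MeasurableSpace α] (μ : Measure α) (p : ℝ) (hp : 1 ≤ p)
    [Fact (1 ≤ ENNReal.ofReal p)]
    (S : Set (List ℕ)) (φ : List ℕ → Lp ℂ (ENNReal.ofReal p) μ)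
    (hφ : Disintegration S φ) (C : Set (List ℕ)) (hC : ANMChain p S φ C)
    (hCne : C.Nonempty) :
    ∃ g : Lp ℂ (ENNReal.ofReal p) μ,
      (∀ ν ∈ C, Subvec g (φ ν)) ∧
      (∀ h : Lp ℂ (ENNReal.ofReal p) μ, (∀ ν ∈ C, Subvec h (φ ν)) → Subvec h g) ∧
      (∀ ε > (0 : ℝ), ∃ ν ∈ C, ∀ ν' ∈ C, ν <+: ν' → ‖φ ν' - g‖ < ε) ∧
      (g = 0 ∨ SubvecAtom g) := by
  obtain ⟨hT, -, -, hsum, hsep, hdense⟩ := hφ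
  obtain ⟨hCS, hchain, hanm⟩ := hC
  have hp0 : 0 < p := by linarith
  have hmono : ∀ a ∈ C, ∀ b ∈ C, a <+: b → Subvec (φ b) (φ a) :=
    fun _ _ _ hb hab => subvec_of_prefix hT hsum hsep (hCS hb) hab
  obtain ⟨g, hg⟩ := hchain.exists_tendsto_chainAtTop hCne hp0 (ψ := φ) (N := fun τ => ‖φ τ‖ ^ p)
    (fun τ _ => by positivity) fun a ha b hb hab => by
      linarith [(hmono a ha b hb hab).norm_rpow_add hp0]
  have := hchain.neBot_chainAtTop hCne
  have hlower : ∀ τ ∈ C, Subvec g (φ τ) := fun τ hτ =>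
    (isClosed_setOf_subvec_left _).mem_of_tendsto hg
      (mem_of_superset (mem_chainAtTop hτ) fun τ' hτ' => hmono τ hτ τ' hτ'.1 hτ'.2)
  have hinf : ∀ h : Lp ℂ (ENNReal.ofReal p) μ, (∀ τ ∈ C, Subvec h (φ τ)) → Subvec h g :=
    fun h hh => (isClosed_setOf_subvec_right h).mem_of_tendsto hg
      (mem_of_superset (mem_chainAtTop hCne.some_mem) fun τ' hτ' => hh τ' hτ'.1)
  refine ⟨g, hlower, hinf, (hchain.tendsto_chainAtTop_iff hCne).1 hg,
    eq_zero_or_subvecAtom_of_dense hdense ?_⟩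
  exact indicatorL_support_mem_span hT hsum hsep hCS hCne
    (fun ν hν hk => (hanm ν hν hk).imp fun _ hk => hk.1) hlower
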